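/- (Boley–Golub inverse eigenvalue problem) Given real numbers $\hat\lambda_1 < a_1 < \hat\lambda_2 < a_2 < \cdots < a_{n-1} < \hat\lambda_n$, define $\hat b_i = \sqrt{(a_i-\hat\lambda_1)(\hat\lambda_n-a_i)\prod_{j=1}^{i-1}\frac{\hat\lambda_{j+1}-a_i}{a_j-a_i}\prod_{j=i+1}^{n-1}\frac{\hat\lambda_j-a_i}{a_j-a_i}}$ and $\hat c = \hat\lambda_n + \sum_{i=1}^{n-1}(\hat\lambda_i - a_i)$. Then the quantity under each square root is positive, and the symmetric arrowhead matrix $\hat A = \begin{pmatrix} D & \hat b \\ \hat b^\top & \hat c \end{pmatrix}$ with $D = \mathrm{diag}(a_1,\ldots,a_{n-1})$ has eigenvalues exactly $\{\hat\lambda_i\}_{i=1}^n$. -/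
import Mathlib


/-- The symmetric arrowhead matrix with shaft `a`, spike `b` and corner `c`. -/
noncomputable def arrowhead (m : ℕ) (a b : Fin m → ℝ) (c : ℝ) :
    Matrix (Fin (m + 1)) (Fin (m + 1)) ℝ :=
  Matrix.of fun i j =>
    if hi : (i : ℕ) < m then
      if _hj : (j : ℕ) < m then (if i = j then a ⟨i, hi⟩ else 0) else b ⟨i, hi⟩
    else if hj : (j : ℕ) < m then b ⟨j, hj⟩ else c

/-- The Boley–Golub radicand for the recovered spike entry. -/
noncomputable def bgRadicand (m : ℕ) (a : Fin m → ℝ) (lam : Fin (m + 1) → ℝ)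
    (i : Fin m) : ℝ :=
  (a i - lam 0) * (lam (Fin.last m) - a i) *
    (∏ j ∈ Finset.Iio i, (lam j.succ - a i) / (a j - a i)) *
    (∏ j ∈ Finset.Ioi i, (lam j.castSucc - a i) / (a j - a i))

open Finset Polynomial Matrix

lemma bg_prod_sub_comm {ι : Type*} (s : Finset ι) (f : ι → ℝ) (x : ℝ) :
    ∏ j ∈ s, (x - f j) = (-1)^s.card * ∏ j ∈ s, (f j - x) := by
  rw [← Finset.prod_const, ← Finset.prod_mul_distrib]
  exact Finset.prod_congr rfl (fun _ _ => by ring)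

lemma bg_prod_sub_comm' {ι : Type*} (s : Finset ι) (f : ι → ℝ) (x : ℝ) :
    ∏ j ∈ s, (f j - x) = (-1)^s.card * ∏ j ∈ s, (x - f j) := by
  rw [bg_prod_sub_comm s f x, ← mul_assoc, ← mul_pow]
  norm_num

lemma bg_fin_prod_split (m : ℕ) (i : Fin m) (g : Fin (m+1) → ℝ) :
    (∏ k, g k) =
      g 0 * g (Fin.last m) * (∏ j ∈ Finset.Iio i, g j.succ) *
        (∏ j ∈ Finset.Ioi i, g j.castSucc) := by
  rw [Fin.prod_univ_succ]
  have h1 : (Finset.univ : Finset (Fin m)) = Finset.Iio i ∪ Finset.Ici i := by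
    ext j
    simp only [Finset.mem_univ, Finset.mem_union, Finset.mem_Iio, Finset.mem_Ici, true_iff]
    exact lt_or_ge j i |>.imp id id
  have hdisj : Disjoint (Finset.Iio i) (Finset.Ici i) := by
    rw [Finset.disjoint_left]; intro j hj hj'
    simp only [Finset.mem_Iio] at hj
    simp only [Finset.mem_Ici] at hj'
    exact absurd hj (not_lt.2 hj')
  have h2 : ∏ j ∈ Finset.Ici i, g j.succ = g (Fin.last m) * ∏ j ∈ Finset.Ioi i, g j.castSucc := by
    have hinj : ∀ x ∈ Finset.Ici i, ∀ y ∈ Finset.Ici i, Fin.succ x = Fin.succ y → x = y :=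
      fun x _ y _ h => Fin.succ_injective _ h
    rw [← Finset.prod_image hinj]
    have hset : (Finset.Ici i).image Fin.succ =
        insert (Fin.last m) ((Finset.Ioi i).image Fin.castSucc) := by
      ext k
      simp only [Finset.mem_image, Finset.mem_Ici, Finset.mem_Ioi, Finset.mem_insert]
      constructor
      · rintro ⟨j, hij, rfl⟩
        rcases eq_or_lt_of_le (Nat.succ_le_of_lt j.isLt) with h | h
        · left; ext; simp [Fin.last]; omega
        · right
          refine ⟨⟨(j:ℕ)+1, h⟩, ?_, ?_⟩
          · rw [Fin.lt_def]; have := (Fin.le_def.1 hij); simp; omega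
          · ext; simp
      · rintro (rfl | ⟨j, hij, rfl⟩)
        · have hm : (i:ℕ) < m := i.isLt
          exact ⟨⟨m-1, by omega⟩, by rw [Fin.le_def]; simp; omega, by ext; simp [Fin.last]; omega⟩
        · have hj1 : 1 ≤ (j:ℕ) := by have := Fin.lt_def.1 hij; omega
          refine ⟨⟨(j:ℕ)-1, by omega⟩, ?_, ?_⟩
          · rw [Fin.le_def]; have := Fin.lt_def.1 hij; simp; omega
          · ext; simp; omega
    have hnotmem : Fin.last m ∉ (Finset.Ioi i).image Fin.castSucc := by
      simp only [Finset.mem_image, not_exists]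
      intro j
      rintro ⟨-, h⟩
      have := congrArg Fin.val h
      simp [Fin.last] at this
      omega
    rw [hset, Finset.prod_insert hnotmem,
      Finset.prod_image (fun x _ y _ h => Fin.castSucc_injective _ h)]
  rw [h1, Finset.prod_union hdisj, h2]
  ring

section
variable (m : ℕ) (a : Fin m → ℝ) (lam : Fin (m + 1) → ℝ)

lemma bg_facts (ha : StrictMono a) (hlam : StrictMono lam)
    (hinter : ∀ i : Fin m, lam i.castSucc < a i ∧ a i < lam i.succ) (i : Fin m) :
    (lam 0 < a i ∧ a i < lam (Fin.last m)) ∧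
    (∀ j ∈ Finset.Iio i, lam j.succ < a i ∧ a j < a i) ∧
    (∀ j ∈ Finset.Ioi i, a i < lam j.castSucc ∧ a i < a j) := by
  refine ⟨⟨lt_of_le_of_lt ?_ (hinter i).1, lt_of_lt_of_le (hinter i).2 ?_⟩, ?_, ?_⟩
  · exact hlam.monotone (by simp [Fin.le_def])
  · exact hlam.monotone (by simp [Fin.le_def, Fin.last])
  · intro j hj
    rw [Finset.mem_Iio] at hj
    refine ⟨lt_of_le_of_lt ?_ (hinter i).1, ha hj⟩
    exact hlam.monotone (by simp [Fin.le_def]; exact Fin.lt_def.1 hj)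
  · intro j hj
    rw [Finset.mem_Ioi] at hj
    refine ⟨lt_of_lt_of_le (hinter i).2 ?_, ha hj⟩
    exact hlam.monotone (by simp [Fin.le_def]; exact Fin.lt_def.1 hj)

lemma bg_pos (ha : StrictMono a) (hlam : StrictMono lam)
    (hinter : ∀ i : Fin m, lam i.castSucc < a i ∧ a i < lam i.succ) (i : Fin m) :
    0 < bgRadicand m a lam i := by
  obtain ⟨⟨h1, h2⟩, hIio, hIoi⟩ := bg_facts m a lam ha hlam hinter i
  unfold bgRadicand
  have p1 : 0 < ∏ j ∈ Finset.Iio i, (lam j.succ - a i) / (a j - a i) := by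
    apply Finset.prod_pos
    intro j hj
    obtain ⟨hl, hA⟩ := hIio j hj
    rw [div_pos_iff]
    right; constructor <;> linarith
  have p2 : 0 < ∏ j ∈ Finset.Ioi i, (lam j.castSucc - a i) / (a j - a i) := by
    apply Finset.prod_pos
    intro j hj
    obtain ⟨hl, hA⟩ := hIoi j hj
    exact div_pos (by linarith) (by linarith)
  have := mul_pos (mul_pos (by linarith : (0:ℝ) < a i - lam 0)
    (by linarith : (0:ℝ) < lam (Fin.last m) - a i)) (mul_pos p1 p2)
  linarith [this]

lemma bg_erase_eq (i : Fin m) :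
    (Finset.univ : Finset (Fin m)).erase i = Finset.Iio i ∪ Finset.Ioi i := by
  ext j
  simp only [Finset.mem_erase, Finset.mem_univ, and_true, Finset.mem_union, Finset.mem_Iio,
    Finset.mem_Ioi]
  exact ⟨fun h => h.lt_or_gt, fun h => h.elim ne_of_lt ne_of_gt⟩

lemma bg_key (ha : StrictMono a) (i : Fin m) :
    bgRadicand m a lam i * ∏ j ∈ (Finset.univ : Finset (Fin m)).erase i, (a j - a i)
      = -(∏ k, (lam k - a i)) := by
  have hne : ∀ j ∈ (Finset.univ : Finset (Fin m)).erase i, a j - a i ≠ 0 := by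
    intro j hj
    have : j ≠ i := (Finset.mem_erase.1 hj).1
    exact sub_ne_zero.2 fun h => this (ha.injective h)
  have hdisj : Disjoint (Finset.Iio i) (Finset.Ioi i) := by
    rw [Finset.disjoint_left]
    intro j hj hj'
    rw [Finset.mem_Iio] at hj; rw [Finset.mem_Ioi] at hj'
    exact absurd hj (not_lt.2 hj'.le)
  rw [bg_erase_eq, Finset.prod_union hdisj]
  unfold bgRadicand
  rw [Finset.prod_div_distrib, Finset.prod_div_distrib]
  rw [bg_fin_prod_split m i (fun k => lam k - a i)]
  have hne1 : ∏ j ∈ Finset.Iio i, (a j - a i) ≠ 0 := by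
    rw [Finset.prod_ne_zero_iff]
    intro j hj
    exact hne j (by rw [bg_erase_eq]; exact Finset.mem_union_left _ hj)
  have hne2 : ∏ j ∈ Finset.Ioi i, (a j - a i) ≠ 0 := by
    rw [Finset.prod_ne_zero_iff]
    intro j hj
    exact hne j (by rw [bg_erase_eq]; exact Finset.mem_union_right _ hj)
  field_simp
  ring

end

lemma bg_keyPoly (m : ℕ) (a : Fin m → ℝ) (lam : Fin (m+1) → ℝ) (r : Fin m → ℝ)
    (ha : Function.Injective a)
    (hc : ∀ i, r i * ∏ j ∈ (Finset.univ : Finset (Fin m)).erase i, (a j - a i)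
      = -(∏ k, (lam k - a i)))
    (hsum : (lam (Fin.last m) + ∑ i, (lam i.castSucc - a i)) + ∑ i, a i = ∑ k, lam k) :
    (X - C (lam (Fin.last m) + ∑ i, (lam i.castSucc - a i))) * (∏ i, (X - C (a i)))
      - ∑ i, C (r i) * ∏ j ∈ (Finset.univ : Finset (Fin m)).erase i, (X - C (a j))
    = ∏ k, (X - C (lam k)) := by
  set c := lam (Fin.last m) + ∑ i, (lam i.castSucc - a i) with hcdef
  set Q : ℝ[X] := ∏ i, (X - C (a i)) with hQdef
  set S : ℝ[X] := ∑ i, C (r i) * ∏ j ∈ (Finset.univ : Finset (Fin m)).erase i, (X - C (a j))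
    with hSdef
  set F : ℝ[X] := (X - C c) * Q - S with hFdef
  set P : ℝ[X] := ∏ k : Fin (m+1), (X - C (lam k)) with hPdef
  have hQm : Q.Monic := monic_prod_of_monic _ _ fun i _ => monic_X_sub_C _
  have hQdeg : Q.natDegree = m := by
    rw [hQdef, natDegree_prod_of_monic _ _ fun i _ => monic_X_sub_C _]
    simp
  have hPm : P.Monic := monic_prod_of_monic _ _ fun k _ => monic_X_sub_C _
  have hPdeg : P.natDegree = m + 1 := by
    rw [hPdef, natDegree_prod_of_monic _ _ fun k _ => monic_X_sub_C _]
    simp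
  have hFm : ((X - C c) * Q).Monic := (monic_X_sub_C c).mul hQm
  have hFdeg : ((X - C c) * Q).natDegree = m + 1 := by
    rw [natDegree_mul (monic_X_sub_C c).ne_zero hQm.ne_zero, natDegree_X_sub_C, hQdeg]
    omega
  have hS0 : ∀ k, m ≤ k → S.coeff k = 0 := by
    intro k hk
    rcases Nat.eq_zero_or_pos m with hm | hm
    · subst hm
      rw [hSdef, Finset.univ_eq_empty, Finset.sum_empty, coeff_zero]
    · apply coeff_eq_zero_of_natDegree_lt
      refine lt_of_le_of_lt (natDegree_sum_le_of_forall_le _ _ ?_) (by omega : m - 1 < k)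
      intro i _
      refine le_trans (natDegree_C_mul_le _ _) ?_
      rw [natDegree_prod_of_monic _ _ fun j _ => monic_X_sub_C _]
      simp [Finset.card_erase_of_mem]
  have htop : ∀ k, m ≤ k → F.coeff k = P.coeff k := by
    intro k hk
    obtain hk' | hk' | hk' : k = m ∨ k = m + 1 ∨ m + 2 ≤ k := by omega
    · rw [hk']
      have h1 : ((X - C c) * Q).coeff m = nextCoeff ((X - C c) * Q) := by
        rw [nextCoeff_of_natDegree_pos (by rw [hFdeg]; omega), hFdeg]
        norm_num
      have h2 : P.coeff m = nextCoeff P := by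
        rw [nextCoeff_of_natDegree_pos (by rw [hPdeg]; omega), hPdeg]
        norm_num
      rw [hFdef, coeff_sub, hS0 m le_rfl, sub_zero, h1, h2,
        Monic.nextCoeff_mul (monic_X_sub_C c) hQm, nextCoeff_X_sub_C, hQdef,
        prod_X_sub_C_nextCoeff, hPdef, prod_X_sub_C_nextCoeff]
      rw [← neg_add, hsum]
    · rw [hk', hFdef, coeff_sub, hS0 _ (by omega), sub_zero]
      have h1 := hFm.coeff_natDegree
      rw [hFdeg] at h1
      have h2 := hPm.coeff_natDegree
      rw [hPdeg] at h2
      rw [h1, h2]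
    · rw [hFdef, coeff_sub, hS0 _ (by omega), sub_zero,
        coeff_eq_zero_of_natDegree_lt (by rw [hFdeg]; omega),
        coeff_eq_zero_of_natDegree_lt (by rw [hPdeg]; omega)]
  have hdeg : (F - P).degree < ((Finset.univ : Finset (Fin m)).card : ℕ) := by
    rw [Finset.card_univ, Fintype.card_fin, degree_lt_iff_coeff_zero]
    intro k hk
    rw [coeff_sub, htop k hk, sub_self]
  have heval : ∀ i ∈ (Finset.univ : Finset (Fin m)), eval (a i) F = eval (a i) P := by
    intro i _
    have hm1 : 1 ≤ m := Nat.one_le_iff_ne_zero.2 (by rintro rfl; exact i.elim0)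
    have hQz : eval (a i) Q = 0 := by
      rw [hQdef, eval_prod]
      exact Finset.prod_eq_zero (Finset.mem_univ i) (by simp)
    have hSz : eval (a i) S = r i * ∏ j ∈ (Finset.univ : Finset (Fin m)).erase i, (a i - a j) := by
      rw [hSdef, eval_finset_sum, Finset.sum_eq_single i]
      · simp [eval_prod]
      · intro t _ ht
        simp only [eval_mul, eval_C, eval_prod, eval_sub, eval_X]
        exact mul_eq_zero_of_right _
          (Finset.prod_eq_zero (Finset.mem_erase.2 ⟨Ne.symm ht, Finset.mem_univ i⟩) (by simp))
      · simp
    have hcard : ((Finset.univ : Finset (Fin m)).erase i).card = m - 1 := by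
      rw [Finset.card_erase_of_mem (Finset.mem_univ i), Finset.card_univ, Fintype.card_fin]
    have e1 : eval (a i) F
        = -((-1:ℝ)^(m-1) * (r i * ∏ j ∈ (Finset.univ : Finset (Fin m)).erase i, (a j - a i))) := by
      rw [hFdef, eval_sub, eval_mul, hQz, mul_zero, zero_sub, hSz,
        bg_prod_sub_comm _ a (a i), hcard]
      ring
    have e2 : eval (a i) P = (-1:ℝ)^(m+1) * ∏ k, (lam k - a i) := by
      rw [hPdef, eval_prod]
      simp only [eval_sub, eval_X, eval_C]
      rw [bg_prod_sub_comm _ lam (a i), Finset.card_univ, Fintype.card_fin]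
    rw [e1, e2, hc i]
    have hpow : ((-1:ℝ))^(m+1) = ((-1:ℝ))^(m-1) := by
      have h2 : m + 1 = (m - 1) + 2 := by omega
      rw [h2, pow_add]
      norm_num
    rw [hpow]
    ring
  exact eq_of_degree_sub_lt_of_eval_index_eq _ (Set.injOn_of_injective ha) hdeg heval

lemma bg_arrowhead_submatrix (m : ℕ) (a b : Fin m → ℝ) (c μ : ℝ) :
    (arrowhead m a b c - μ • (1 : Matrix (Fin (m+1)) (Fin (m+1)) ℝ)).submatrix
        finSumFinEquiv finSumFinEquiv
      = Matrix.fromBlocks (Matrix.diagonal fun i => a i - μ)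
          (Matrix.of fun i (_ : Fin 1) => b i) (Matrix.of fun (_ : Fin 1) j => b j)
          (Matrix.of fun (_ : Fin 1) (_ : Fin 1) => c - μ) := by
  ext i j
  rcases i with i | i <;> rcases j with j | j <;>
    simp only [Matrix.submatrix_apply, finSumFinEquiv_apply_left, finSumFinEquiv_apply_right,
      Matrix.sub_apply, Matrix.smul_apply, Matrix.one_apply, smul_eq_mul,
      Matrix.fromBlocks_apply₁₁, Matrix.fromBlocks_apply₁₂, Matrix.fromBlocks_apply₂₁,
      Matrix.fromBlocks_apply₂₂, arrowhead, Matrix.of_apply, Matrix.diagonal_apply]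
  · have hi : ((Fin.castAdd 1 i : Fin (m+1)) : ℕ) < m := by simp
    have hj : ((Fin.castAdd 1 j : Fin (m+1)) : ℕ) < m := by simp
    rw [dif_pos hi, dif_pos hj]
    have hij : (Fin.castAdd 1 i = Fin.castAdd 1 j) ↔ i = j := by
      constructor
      · intro h; exact Fin.castAdd_injective _ _ h
      · rintro rfl; rfl
    by_cases h : i = j
    · subst h
      rw [if_pos rfl, if_pos rfl]
      norm_num
    · rw [if_neg (fun hh => h (hij.1 hh)), if_neg h, if_neg (fun hh => h (hij.1 hh))]
      ring
  · have hi : ((Fin.castAdd 1 i : Fin (m+1)) : ℕ) < m := by simp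
    have hj : ¬ ((Fin.natAdd m j : Fin (m+1)) : ℕ) < m := by simp
    rw [dif_pos hi, dif_neg hj, if_neg (by
      intro h
      have := congrArg Fin.val h
      simp at this
      omega)]
    simp
  · have hi : ¬ ((Fin.natAdd m i : Fin (m+1)) : ℕ) < m := by simp
    have hj : ((Fin.castAdd 1 j : Fin (m+1)) : ℕ) < m := by simp
    rw [dif_neg hi, dif_pos hj, if_neg (by
      intro h
      have := congrArg Fin.val h
      simp at this
      omega)]
    simp
  · have hi : ¬ ((Fin.natAdd m i : Fin (m+1)) : ℕ) < m := by simp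
    have hj : ¬ ((Fin.natAdd m j : Fin (m+1)) : ℕ) < m := by simp
    rw [dif_neg hi, dif_neg hj, if_pos (by
      congr 1
      exact Subsingleton.elim i j)]
    ring

lemma bg_arrowhead_det (m : ℕ) (a b : Fin m → ℝ) (c μ : ℝ) (hμ : ∀ i, a i - μ ≠ 0) :
    (arrowhead m a b c - μ • (1 : Matrix (Fin (m+1)) (Fin (m+1)) ℝ)).det
      = (c - μ) * ∏ i, (a i - μ)
        - ∑ i, (b i)^2 * ∏ j ∈ (Finset.univ : Finset (Fin m)).erase i, (a j - μ) := by
  have h1 : (arrowhead m a b c - μ • (1 : Matrix (Fin (m+1)) (Fin (m+1)) ℝ)).det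
      = (Matrix.fromBlocks (Matrix.diagonal fun i => a i - μ)
          (Matrix.of fun i (_ : Fin 1) => b i) (Matrix.of fun (_ : Fin 1) j => b j)
          (Matrix.of fun (_ : Fin 1) (_ : Fin 1) => c - μ)).det := by
    rw [← bg_arrowhead_submatrix, Matrix.det_submatrix_equiv_self]
  rw [h1]
  letI hv : Invertible (fun i => a i - μ : Fin m → ℝ) :=
    ⟨fun i => (a i - μ)⁻¹, funext fun i => inv_mul_cancel₀ (hμ i),
      funext fun i => mul_inv_cancel₀ (hμ i)⟩
  letI := Matrix.diagonalInvertible (fun i => a i - μ)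
  rw [Matrix.det_fromBlocks₁₁, Matrix.det_diagonal]
  have hinv : (⅟(Matrix.diagonal fun i => a i - μ) : Matrix (Fin m) (Fin m) ℝ)
      = Matrix.diagonal fun i => (a i - μ)⁻¹ := by
    rw [Matrix.invOf_diagonal_eq]
    rfl
  rw [hinv]
  have h2 : ((Matrix.of fun (_ : Fin 1) (_ : Fin 1) => c - μ)
      - (Matrix.of fun (_ : Fin 1) j => b j) * (Matrix.diagonal fun i => (a i - μ)⁻¹)
        * (Matrix.of fun i (_ : Fin 1) => b i)).det
      = (c - μ) - ∑ i, (b i)^2 * (a i - μ)⁻¹ := by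
    rw [Matrix.det_fin_one]
    simp only [Matrix.sub_apply, Matrix.of_apply, Matrix.mul_apply, Matrix.diagonal_apply,
      mul_ite, mul_zero, Finset.sum_ite_eq', Finset.mem_univ, if_true]
    congr 1
    apply Finset.sum_congr rfl
    intro j _
    ring
  rw [h2, mul_sub, Finset.mul_sum]
  congr 1
  · ring
  · apply Finset.sum_congr rfl
    intro i _
    rw [← Finset.prod_erase_mul _ _ (Finset.mem_univ i)]
    have := hμ i
    field_simp

/-- Boley–Golub inverse eigenvalue problem: given data strictly
interlacing the shaft, the radicands are positive and the reconstructed symmetric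
arrowhead matrix has exactly the prescribed eigenvalues. -/
theorem boley_golub_inverse_eigenvalue (m : ℕ) (a : Fin m → ℝ)
    (lam : Fin (m + 1) → ℝ) (ha : StrictMono a) (hlam : StrictMono lam)
    (hinter : ∀ i : Fin m, lam i.castSucc < a i ∧ a i < lam i.succ) :
    (∀ i : Fin m, 0 < bgRadicand m a lam i) ∧
    (∀ μ : ℝ,
      (arrowhead m a (fun i => Real.sqrt (bgRadicand m a lam i))
            (lam (Fin.last m) + ∑ i : Fin m, (lam i.castSucc - a i)) -
          μ • (1 : Matrix (Fin (m + 1)) (Fin (m + 1)) ℝ)).det = 0 ↔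
        ∃ k, μ = lam k) := by
  have hpos : ∀ i : Fin m, 0 < bgRadicand m a lam i := bg_pos m a lam ha hlam hinter
  refine ⟨hpos, ?_⟩
  set b : Fin m → ℝ := fun i => Real.sqrt (bgRadicand m a lam i) with hbdef
  set c : ℝ := lam (Fin.last m) + ∑ i : Fin m, (lam i.castSucc - a i) with hcdef
  have hb2 : ∀ i, (b i)^2 = bgRadicand m a lam i := fun i => Real.sq_sqrt (hpos i).le
  have hsum : c + ∑ i, a i = ∑ k, lam k := by
    rw [hcdef, Fin.sum_univ_castSucc (f := lam), Finset.sum_sub_distrib]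
    ring
  have hFP := bg_keyPoly m a lam (bgRadicand m a lam) ha.injective (bg_key m a lam ha) hsum
  set P : ℝ[X] := ∏ k : Fin (m+1), (X - C (lam k)) with hPdef
  -- determinant for good μ
  have e3 : ∀ μ : ℝ, (∀ i, a i - μ ≠ 0) →
      (arrowhead m a b c - μ • (1 : Matrix (Fin (m+1)) (Fin (m+1)) ℝ)).det
        = (-1:ℝ)^(m+1) * eval μ P := by
    intro μ hμ
    rw [bg_arrowhead_det m a b c μ hμ, ← hFP]
    simp only [eval_sub, eval_mul, eval_prod, eval_finset_sum, eval_C, eval_X]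
    rw [show (∑ i, (b i)^2 * ∏ j ∈ (Finset.univ : Finset (Fin m)).erase i, (a j - μ))
        = ∑ i, bgRadicand m a lam i
            * ((-1:ℝ)^(m-1) * ∏ j ∈ (Finset.univ : Finset (Fin m)).erase i, (μ - a j)) from
      Finset.sum_congr rfl fun i _ => by
        rw [hb2 i, bg_prod_sub_comm' ((Finset.univ : Finset (Fin m)).erase i) a μ,
          Finset.card_erase_of_mem (Finset.mem_univ i), Finset.card_univ, Fintype.card_fin]]
    rw [bg_prod_sub_comm' Finset.univ a μ, Finset.card_univ, Fintype.card_fin]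
    rcases Nat.eq_zero_or_pos m with hm | hm
    · haveI : IsEmpty (Fin m) := ⟨fun i => absurd i.isLt (by omega)⟩
      simp only [Finset.univ_eq_empty, Finset.sum_empty, Finset.prod_empty, hm]
      norm_num
      rw [hcdef, Finset.univ_eq_empty, Finset.sum_empty, add_zero]
    · have hpow : ((-1:ℝ))^(m-1) = ((-1:ℝ))^(m+1) := by
        have h2 : m + 1 = (m - 1) + 2 := by omega
        rw [h2, pow_add]
        norm_num
      rw [hpow]
      rw [show (∑ i, bgRadicand m a lam i
            * ((-1:ℝ)^(m+1) * ∏ j ∈ (Finset.univ : Finset (Fin m)).erase i, (μ - a j)))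
          = (-1:ℝ)^(m+1) * ∑ i, bgRadicand m a lam i
            * ∏ j ∈ (Finset.univ : Finset (Fin m)).erase i, (μ - a j) from by
        rw [Finset.mul_sum]
        exact Finset.sum_congr rfl fun i _ => by ring]
      rw [pow_succ]
      ring
  -- polynomial identification
  set Mp : Matrix (Fin (m+1)) (Fin (m+1)) ℝ[X] :=
    (arrowhead m a b c).map C - (X : ℝ[X]) • 1 with hMpdef
  have hev : ∀ r : ℝ, eval r Mp.det = (arrowhead m a b c
      - r • (1 : Matrix (Fin (m+1)) (Fin (m+1)) ℝ)).det := by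
    intro r
    have := RingHom.map_det (evalRingHom r) Mp
    rw [coe_evalRingHom] at this
    rw [this]
    congr 1
    ext i j
    simp only [hMpdef, Matrix.map_apply, Matrix.sub_apply, Matrix.smul_apply, Matrix.one_apply,
      smul_eq_mul, eval_sub, eval_mul, eval_C, eval_X, mul_ite, mul_one, mul_zero, apply_ite]
    split_ifs with h <;> simp [Matrix.one_apply, h]
  have hinf : Set.Infinite {x : ℝ | eval x Mp.det = eval x (C ((-1:ℝ)^(m+1)) * P)} := by
    apply Set.Infinite.mono ?_ ((Set.finite_range a).infinite_compl)
    intro x hx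
    have hxne : ∀ i, a i - x ≠ 0 := fun i => sub_ne_zero.2 (fun h => hx ⟨i, h⟩)
    show eval x Mp.det = eval x (C ((-1:ℝ)^(m+1)) * P)
    rw [hev x, e3 x hxne, eval_mul, eval_C]
  have hD : Mp.det = C ((-1:ℝ)^(m+1)) * P := eq_of_infinite_eval_eq _ _ hinf
  have hall : ∀ μ : ℝ, (arrowhead m a b c
      - μ • (1 : Matrix (Fin (m+1)) (Fin (m+1)) ℝ)).det = ∏ k, (lam k - μ) := by
    intro μ
    rw [← hev μ, hD, eval_mul, eval_C, hPdef, eval_prod]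
    simp only [eval_sub, eval_X, eval_C]
    rw [bg_prod_sub_comm Finset.univ lam μ, Finset.card_univ, Fintype.card_fin,
      ← mul_assoc, ← mul_pow]
    norm_num
  intro μ
  rw [hall μ, Finset.prod_eq_zero_iff]
  constructor
  · rintro ⟨k, -, hk⟩
    exact ⟨k, by linarith [sub_eq_zero.1 hk]⟩
  · rintro ⟨k, rfl⟩
    exact ⟨k, Finset.mem_univ k, by ring⟩
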